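/- In the braid group B_5, the word σ1 σ1 σ2 σ1⁻¹ σ3 σ2⁻¹ σ3 σ4 σ3⁻¹ σ2 σ3⁻¹ σ4 (a braid representative of the knot 11n139) equals the product of the positive bands of its band decomposition with band centers {1, 3, 8, 12}; in particular, this braid is quasipositive. -/

import Mathlib

/-- The Artin relations for the braid group with `m` generators
`σ_1, …, σ_m` (indexed by `Fin m`), i.e. the braid group `B_{m+1}`:
`σ_i σ_j = σ_j σ_i` for `|i - j| ≥ 2`, and
`σ_i σ_{i+1} σ_i = σ_{i+1} σ_i σ_{i+1}`. -/
def braidRels (m : ℕ) : Set (FreeGroup (Fin m)) :=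
  { r | (∃ i j : Fin m, (i : ℕ) + 2 ≤ (j : ℕ) ∧
          r = FreeGroup.of i * FreeGroup.of j * (FreeGroup.of i)⁻¹ * (FreeGroup.of j)⁻¹) ∨
        (∃ i j : Fin m, (i : ℕ) + 1 = (j : ℕ) ∧
          r = FreeGroup.of i * FreeGroup.of j * FreeGroup.of i *
              (FreeGroup.of j)⁻¹ * (FreeGroup.of i)⁻¹ * (FreeGroup.of j)⁻¹) }

/-- The braid group `B_{m+1}`, presented with `m` Artin generators.
Here index `i : Fin m` corresponds to the Artin generator `σ_{i+1}`. -/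
abbrev BraidGrp (m : ℕ) := PresentedGroup (braidRels m)

/-- The Artin generator `σ_{i+1}` of the braid group `B_{m+1}`. -/
def σ {m : ℕ} (i : Fin m) : BraidGrp m := PresentedGroup.of i

/-- A letter of a braid word: a generator index together with a sign
(`true` = the positive generator, `false` = its inverse). -/
abbrev Letter (m : ℕ) := Fin m × Bool

/-- The group element represented by a letter. -/
def letterEl {m : ℕ} (x : Letter m) : BraidGrp m :=
  if x.2 then σ x.1 else (σ x.1)⁻¹

/-- The group element represented by a braid word. -/
def wordProd {m : ℕ} (w : List (Letter m)) : BraidGrp m :=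
  (w.map letterEl).prod

/-- The band of the band decomposition of the word `w` with band centers `S`
(1-based positions) at center `p`: namely `α_p * x_p * α_p⁻¹`, where `x_p` is
the letter of `w` at position `p` and `α_p` is the product, in increasing
order of position, of the letters of `w` at positions `q < p` with `q ∉ S`. -/
def band {m : ℕ} (w : List (Letter m)) (S : List ℕ) (p : ℕ) : BraidGrp m :=
  let α : BraidGrp m :=
    wordProd (((w.zipIdx.map Prod.swap).filter fun qx => decide (qx.1 + 1 < p ∧ qx.1 + 1 ∉ S)).map Prod.snd)
  match w[p - 1]? with
  | some x => α * letterEl x * α⁻¹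
  | none => 1

/-- The product, in increasing order of band center, of the bands of the
band decomposition of the word `w` with band centers `S`. -/
def bandProd {m : ℕ} (w : List (Letter m)) (S : List ℕ) : BraidGrp m :=
  (S.map (band w S)).prod

/-- A positive band in the braid group: a conjugate `α σ_j α⁻¹` of a generator. -/
def IsPositiveBand {m : ℕ} (x : BraidGrp m) : Prop :=
  ∃ (α : BraidGrp m) (j : Fin m), x = α * σ j * α⁻¹

/-- A braid is quasipositive if it is a product of positive bands. -/
def IsQuasipositive {m : ℕ} (x : BraidGrp m) : Prop :=
  ∃ l : List (BraidGrp m), (∀ b ∈ l, IsPositiveBand b) ∧ x = l.prod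

/-- A negative band in the braid group: a conjugate `α σ_j⁻¹ α⁻¹` of the
inverse of a generator. -/
def IsNegativeBand {m : ℕ} (x : BraidGrp m) : Prop :=
  ∃ (α : BraidGrp m) (j : Fin m), x = α * (σ j)⁻¹ * α⁻¹

/-- A braid is quasinegative if it is a product of negative bands. -/
def IsQuasinegative {m : ℕ} (x : BraidGrp m) : Prop :=
  ∃ l : List (BraidGrp m), (∀ b ∈ l, IsNegativeBand b) ∧ x = l.prod

/-- The braid word for the knot `11n139` (letter `(i, true)` is `σ_(i+1)`,
`(i, false)` is `σ_(i+1)⁻¹`). -/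
def theWord : List (Letter 4) :=
  [(0, true), (0, true), (1, true), (0, false), (2, true), (1, false), (2, true), (3, true), (2, false), (1, true), (2, false), (3, true)]

/-- The band centers. -/
def theCenters : List ℕ := [1, 3, 8, 12]

/-!
For band centers `p₁ < ⋯ < p_k` of a word `w`, the bands telescope: in any group,
`w = b_{p₁} ⋯ b_{p_k} · w'`, where `w'` is `w` with the center letters deleted. For the word of
`11n139` with centers `{1, 3, 8, 12}` the deleted word is `σ₁ σ₁⁻¹ σ₃ σ₂⁻¹ σ₃ σ₃⁻¹ σ₂ σ₃⁻¹`, which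
cancels freely, and every center letter is a positive generator.
-/

variable {m : ℕ}

/-- The word `w` with the letters at the band centers `S` deleted. -/
def offCenterWord (w : List (Letter m)) (S : List ℕ) : List (Letter m) :=
  ((w.zipIdx.map Prod.swap).filter fun qx => decide (qx.1 + 1 ∉ S)).map Prod.snd

lemma wordProd_append (u v : List (Letter m)) : wordProd (u ++ v) = wordProd u * wordProd v := by
  simp [wordProd]

lemma offCenterWord_append_singleton (w : List (Letter m)) (S : List ℕ) (x : Letter m) :
    offCenterWord (w ++ [x]) S = offCenterWord w S ++ if w.length + 1 ∈ S then [] else [x] := by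
  split_ifs <;> simp [offCenterWord, List.zipIdx_append, *]

lemma band_append_of_le (w v : List (Letter m)) (S : List ℕ) {p : ℕ} (hp : 1 ≤ p)
    (hpw : p ≤ w.length) : band (w ++ v) S p = band w S p := by
  have hv : ((v.zipIdx (0 + w.length)).map Prod.swap).filter
      (fun qx => decide (qx.1 + 1 < p ∧ qx.1 + 1 ∉ S)) = [] := by
    simp only [List.filter_eq_nil_iff, List.forall_mem_map]
    rintro ⟨x, q⟩ hq
    have := (List.mem_zipIdx hq).1
    rw [Prod.swap_prod_mk, decide_eq_true_eq]
    exact fun h => absurd h.1 (by omega)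
  simp only [band, List.zipIdx_append, List.map_append, List.filter_append, hv, List.append_nil,
    List.getElem?_append_left (show p - 1 < w.length by omega)]

lemma band_append_singleton_length (w : List (Letter m)) (S : List ℕ) (x : Letter m) :
    band (w ++ [x]) S (w.length + 1) =
      wordProd (offCenterWord w S) * letterEl x * (wordProd (offCenterWord w S))⁻¹ := by
  have hw : (w.zipIdx.map Prod.swap).filter
      (fun qx => decide (qx.1 + 1 < w.length + 1 ∧ qx.1 + 1 ∉ S)) =
      (w.zipIdx.map Prod.swap).filter (fun qx => decide (qx.1 + 1 ∉ S)) := by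
    refine List.filter_congr ?_
    simp only [List.forall_mem_map]
    rintro ⟨x, q⟩ hq
    have := (List.mem_zipIdx hq).2.1
    rw [Prod.swap_prod_mk]
    exact decide_eq_decide.2 (and_iff_right (by omega))
  simp only [band, List.zipIdx_append, List.map_append, List.filter_append, hw]
  simp [offCenterWord]

/-- Telescoping: consecutive bands `α_p x_p α_p⁻¹` and `α_q x_q α_q⁻¹` multiply to
`α_p x_p (α_p⁻¹ α_q) x_q α_q⁻¹`, and `α_p⁻¹ α_q` is exactly the stretch of `w` strictly between
`p` and `q`. -/
lemma bandProd_range_mul_wordProd_offCenterWord (w : List (Letter m)) (S : List ℕ) :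
    (((List.range' 1 w.length).filter (· ∈ S)).map (band w S)).prod *
      wordProd (offCenterWord w S) = wordProd w := by
  induction w using List.reverseRecOn with
  | nil => simp [offCenterWord, wordProd]
  | append_singleton w x ih =>
    have hprefix : ((List.range' 1 w.length).filter (· ∈ S)).map (band (w ++ [x]) S) =
        ((List.range' 1 w.length).filter (· ∈ S)).map (band w S) :=
      List.map_congr_left fun p hp => by
        have := List.mem_range'_1.1 (List.mem_filter.1 hp).1
        exact band_append_of_le w [x] S (by omega) (by omega)
    have hlast : List.range' 1 (w.length + 1) = List.range' 1 w.length ++ [w.length + 1] := by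
      rw [List.range'_concat, one_mul, add_comm]
    rw [List.length_append, List.length_singleton, hlast, List.filter_append, List.map_append,
      List.prod_append, hprefix, offCenterWord_append_singleton, wordProd_append, wordProd_append,
      ← ih]
    by_cases hS : w.length + 1 ∈ S
    · simp [hS, band_append_singleton_length, wordProd, mul_assoc]
    · simp [hS, wordProd, mul_assoc]

lemma filter_mem_range'_eq_self {S : List ℕ} {n : ℕ} (hS : S.Pairwise (· < ·))
    (hSn : ∀ p ∈ S, 1 ≤ p ∧ p ≤ n) : (List.range' 1 n).filter (· ∈ S) = S := by
  refine ((List.pairwise_lt_range').filter _).eq_of_mem_iff hS fun p => ?_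
  simp only [List.mem_filter, List.mem_range'_1, decide_eq_true_eq]
  exact ⟨And.right, fun hp => ⟨by have := hSn p hp; omega, hp⟩⟩

theorem wordProd_eq_bandProd_mul_wordProd_offCenterWord (w : List (Letter m)) (S : List ℕ)
    (hS : S.Pairwise (· < ·)) (hSw : ∀ p ∈ S, 1 ≤ p ∧ p ≤ w.length) :
    wordProd w = bandProd w S * wordProd (offCenterWord w S) := by
  rw [← bandProd_range_mul_wordProd_offCenterWord, filter_mem_range'_eq_self hS hSw, bandProd]

lemma isPositiveBand_band (w : List (Letter m)) (S : List ℕ) {p : ℕ} {j : Fin m}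
    (h : w[p - 1]? = some (j, true)) : IsPositiveBand (band w S p) := by
  simp only [band, h, letterEl]
  exact ⟨_, j, rfl⟩

theorem isQuasipositive_bandProd (w : List (Letter m)) (S : List ℕ)
    (h : ∀ p ∈ S, ∃ j, w[p - 1]? = some (j, true)) : IsQuasipositive (bandProd w S) :=
  ⟨S.map (band w S),
    by simpa using fun p hp => (h p hp).elim fun j hj => isPositiveBand_band w S hj, rfl⟩

/-- The braid representative of `11n139` equals the product of the bands of its
band decomposition with the given band centers; in particular it is quasipositive. -/
theorem knot_11n139_quasipositive :
    wordProd theWord = bandProd theWord theCenters ∧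
      IsQuasipositive (wordProd theWord) := by
  have hcancel : wordProd (offCenterWord theWord theCenters) = 1 := by
    have hdeleted : offCenterWord theWord theCenters =
        [(0, true), (0, false), (2, true), (1, false), (2, true), (2, false), (1, true), (2, false)] :=
      by decide
    simp [hdeleted, wordProd, letterEl]
  have heq : wordProd theWord = bandProd theWord theCenters := by
    rw [wordProd_eq_bandProd_mul_wordProd_offCenterWord theWord theCenters (by decide)
      (by decide), hcancel, mul_one]
  exact ⟨heq, heq ▸ isQuasipositive_bandProd theWord theCenters (by decide)⟩
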